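/- A vector u ∈ ℝ² lies in Z[ω] (under the identification of ℂ with ℝ²) if and only if u = (x₁ + x₂/√2, y₁ + y₂/√2) for integers x₁, x₂, y₁, y₂ with x₂ ≡ y₂ (mod 2). -/

import Mathlib

noncomputable def ω : ℂ := (1 + Complex.I) / (Real.sqrt 2 : ℂ)

/-! Since `ω ^ 2 = i`, the element `a ω³ + b ω² + c ω + d` equals `(d + b i) + (c + a i) ω`, whose
real and imaginary parts are `d + (c - a)/√2` and `b + (c + a)/√2`. The two coefficients of `1/√2`
differ by `2a`, and conversely any pair `x₂ ≡ y₂ (mod 2)` arises as `(c - a, c + a)`. -/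

lemma ω_re : ω.re = 1 / Real.sqrt 2 := by
  simp [ω]

lemma ω_im : ω.im = 1 / Real.sqrt 2 := by
  simp [ω]

lemma ω_sq : ω ^ 2 = Complex.I := by
  have h : ((Real.sqrt 2 : ℂ)) ^ 2 = 2 := by
    rw [← Complex.ofReal_pow, Real.sq_sqrt zero_le_two, Complex.ofReal_ofNat]
  rw [ω, div_pow, h, add_sq, Complex.I_sq]
  ring

lemma poly_ω_eq (a b c d : ℂ) :
    a * ω ^ 3 + b * ω ^ 2 + c * ω + d = (d + b * Complex.I) + (c + a * Complex.I) * ω := by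
  rw [pow_succ, ω_sq]
  ring

lemma re_poly_ω (a b c d : ℤ) :
    ((a : ℂ) * ω ^ 3 + b * ω ^ 2 + c * ω + d).re = d + (c - a : ℤ) / Real.sqrt 2 := by
  rw [poly_ω_eq]
  simp only [Complex.add_re, Complex.add_im, Complex.mul_re, Complex.mul_im, Complex.intCast_re,
    Complex.intCast_im, Complex.I_re, Complex.I_im, ω_re, ω_im]
  push_cast
  ring

lemma im_poly_ω (a b c d : ℤ) :
    ((a : ℂ) * ω ^ 3 + b * ω ^ 2 + c * ω + d).im = b + (c + a : ℤ) / Real.sqrt 2 := by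
  rw [poly_ω_eq]
  simp only [Complex.add_re, Complex.add_im, Complex.mul_re, Complex.mul_im, Complex.intCast_re,
    Complex.intCast_im, Complex.I_re, Complex.I_im, ω_re, ω_im]
  push_cast
  ring

/-- u ∈ ℂ lies in ℤ[ω] iff u = (x₁ + x₂/√2) + (y₁ + y₂/√2) i with x₁,x₂,y₁,y₂ ∈ ℤ
    and x₂ ≡ y₂ (mod 2). -/
theorem mem_Zomega_iff_coords (u : ℂ) :
    (∃ a b c d : ℤ, u = a * ω ^ 3 + b * ω ^ 2 + c * ω + d) ↔
    (∃ x₁ x₂ y₁ y₂ : ℤ, u.re = x₁ + x₂ / Real.sqrt 2 ∧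
      u.im = y₁ + y₂ / Real.sqrt 2 ∧ x₂ % 2 = y₂ % 2) := by
  constructor
  · rintro ⟨a, b, c, d, rfl⟩
    exact ⟨d, c - a, b, c + a, re_poly_ω a b c d, im_poly_ω a b c d, by omega⟩
  · rintro ⟨x₁, x₂, y₁, y₂, hre, him, hpar⟩
    obtain ⟨k, hk⟩ : (2 : ℤ) ∣ y₂ - x₂ := Int.ModEq.dvd hpar
    refine ⟨k, y₁, x₂ + k, x₁, Complex.ext ?_ ?_⟩
    · rw [hre, re_poly_ω, add_sub_cancel_right]
    · rw [him, im_poly_ω, show x₂ + k + k = y₂ by omega]
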